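/- arXiv:1701.08962 — 4 statements merged into one kernel-verified Lean document; each statement's English description precedes it below -/
import Mathlib

section
/- Let f : [0,1] → ℝ be continuously differentiable and let t ∈ [0,1). Then the right Caputo fractional derivative of f of order r at t, namely ^C D_{1−}^r f(t) = −(1/Γ(1−r)) ∫_t^1 (s−t)^{−r} f′(s) ds, converges to −f′(t) as r → 1⁻. -/
open Real Set MeasureTheory intervalIntegral Filter

lemma caputo_rpow_integrable {b r : ℝ} (hr : r < 1) :
    IntervalIntegrable (fun u : ℝ => u ^ (-r)) volume 0 b :=
  intervalIntegral.intervalIntegrable_rpow' (by linarith)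

lemma caputo_rpow_integral {b r : ℝ} (hr : r < 1) :
    ∫ u in (0:ℝ)..b, u ^ (-r) = b ^ (1 - r) / (1 - r) := by
  rw [integral_rpow (Or.inl (by linarith))]
  rw [Real.zero_rpow (by intro h; nlinarith [h] : -r + 1 ≠ 0)]
  have : -r + 1 = 1 - r := by ring
  rw [this]
  ring

lemma caputo_aux0 {b : ℝ} (hb0 : 0 < b) (hb1 : b ≤ 1) {g : ℝ → ℝ}
    (hg : ContinuousOn g (Icc 0 b)) :
    Tendsto (fun r : ℝ => (1 - r) * ∫ u in (0:ℝ)..b, u ^ (-r) * (g u - g 0))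
      (nhdsWithin 1 (Iio 1)) (nhds 0) := by
  obtain ⟨C, hC⟩ := isCompact_Icc.exists_bound_of_continuousOn hg
  have hC0 : 0 ≤ C := le_trans (norm_nonneg _) (hC 0 ⟨le_refl _, hb0.le⟩)
  rw [NormedAddCommGroup.tendsto_nhds_zero]
  intro ε hε
  -- continuity of g at 0 within Icc 0 b
  have hcont := hg 0 ⟨le_refl _, hb0.le⟩
  rw [Metric.continuousWithinAt_iff] at hcont
  obtain ⟨δ, hδ0, hδ⟩ := hcont (ε / 2) (by linarith)
  set d : ℝ := min (δ / 2) b with hd_def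
  have hd0 : 0 < d := lt_min (by linarith) hb0
  have hdb : d ≤ b := min_le_right _ _
  have hd1 : d ≤ 1 := hdb.trans hb1
  have key : ∀ u ∈ Icc 0 d, |g u - g 0| ≤ ε / 2 := by
    intro u hu
    have hub : u ∈ Icc 0 b := ⟨hu.1, hu.2.trans hdb⟩
    have : dist u 0 < δ := by
      rw [Real.dist_eq, sub_zero, abs_of_nonneg hu.1]
      have := hu.2
      have : u ≤ δ / 2 := this.trans (min_le_left _ _)
      linarith
    have := hδ hub this
    rw [Real.dist_eq] at this
    linarith
  have hIoo : Ioo (max (1/2) (1 - ε * d / (4 * C + 2))) 1 ∈ nhdsWithin (1:ℝ) (Iio 1) := by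
    apply Ioo_mem_nhdsLT_of_mem
    constructor
    · apply max_lt (by norm_num)
      have : 0 < ε * d / (4 * C + 2) := by positivity
      linarith
    · exact le_refl _
  filter_upwards [hIoo] with r hr
  have hr1 : r < 1 := hr.2
  have hr0 : (0:ℝ) < r := lt_of_le_of_lt (by norm_num) ((le_max_left _ _).trans_lt hr.1)
  have hrε : 1 - r < ε * d / (4 * C + 2) := by
    have := (le_max_right (1/2 : ℝ) (1 - ε * d / (4 * C + 2))).trans_lt hr.1
    linarith
  have h1r : 0 < 1 - r := by linarith
  -- integrability facts
  have habs : ContinuousOn (fun u => |g u - g 0|) (Icc 0 b) :=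
    (hg.sub continuousOn_const).abs
  have hint1 : IntervalIntegrable (fun u : ℝ => u ^ (-r) * |g u - g 0|) volume 0 b := by
    apply (caputo_rpow_integrable hr1).mul_continuousOn
    rwa [uIcc_of_le hb0.le]
  have hint1a : IntervalIntegrable (fun u : ℝ => u ^ (-r) * |g u - g 0|) volume 0 d :=
    hint1.mono_set (by rw [uIcc_of_le hd0.le, uIcc_of_le hb0.le]; exact Icc_subset_Icc (le_refl _) hdb)
  have hint1b : IntervalIntegrable (fun u : ℝ => u ^ (-r) * |g u - g 0|) volume d b :=
    hint1.mono_set (by rw [uIcc_of_le hdb, uIcc_of_le hb0.le]; exact Icc_subset_Icc hd0.le (le_refl _))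
  have hint2a : IntervalIntegrable (fun u : ℝ => u ^ (-r) * (ε / 2)) volume 0 d :=
    (caputo_rpow_integrable hr1).mul_const _
  -- step 1 : |∫| ≤ ∫ of abs
  set I : ℝ := ∫ u in (0:ℝ)..b, u ^ (-r) * (g u - g 0) with hI
  have step1 : |I| ≤ ∫ u in (0:ℝ)..b, u ^ (-r) * |g u - g 0| := by
    calc |I| ≤ ∫ u in (0:ℝ)..b, |u ^ (-r) * (g u - g 0)| :=
          intervalIntegral.abs_integral_le_integral_abs hb0.le
    _ = ∫ u in (0:ℝ)..b, u ^ (-r) * |g u - g 0| := by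
        apply intervalIntegral.integral_congr
        intro u hu
        rw [uIcc_of_le hb0.le] at hu
        show |u ^ (-r) * (g u - g 0)| = u ^ (-r) * |g u - g 0|
        rw [abs_mul, abs_of_nonneg (Real.rpow_nonneg hu.1 _)]
  -- step 2 : split
  have step2 : ∫ u in (0:ℝ)..b, u ^ (-r) * |g u - g 0|
      = (∫ u in (0:ℝ)..d, u ^ (-r) * |g u - g 0|)
        + ∫ u in d..b, u ^ (-r) * |g u - g 0| :=
    (intervalIntegral.integral_add_adjacent_intervals hint1a hint1b).symm
  -- piece 1
  have piece1 : (∫ u in (0:ℝ)..d, u ^ (-r) * |g u - g 0|) ≤ ε / 2 * (d ^ (1 - r) / (1 - r)) := by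
    calc (∫ u in (0:ℝ)..d, u ^ (-r) * |g u - g 0|)
        ≤ ∫ u in (0:ℝ)..d, u ^ (-r) * (ε / 2) := by
          apply intervalIntegral.integral_mono_on hd0.le hint1a hint2a
          intro u hu
          exact mul_le_mul_of_nonneg_left (key u hu) (Real.rpow_nonneg hu.1 _)
    _ = ε / 2 * (d ^ (1 - r) / (1 - r)) := by
          rw [intervalIntegral.integral_mul_const, caputo_rpow_integral hr1]; ring
  -- piece 2
  have piece2 : (∫ u in d..b, u ^ (-r) * |g u - g 0|) ≤ d⁻¹ * (2 * C) := by
    have hptwise : ∀ u ∈ Icc d b, u ^ (-r) * |g u - g 0| ≤ d⁻¹ * (2 * C) := by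
      intro u hu
      have hu0 : 0 < u := lt_of_lt_of_le hd0 hu.1
      have h1 : u ^ (-r) ≤ d ^ (-r) :=
        Real.rpow_le_rpow_of_nonpos hd0 hu.1 (by linarith)
      have h2 : d ^ (-r) ≤ d ^ (-1 : ℝ) :=
        Real.rpow_le_rpow_of_exponent_ge hd0 hd1 (by linarith)
      have h3 : d ^ (-1 : ℝ) = d⁻¹ := by
        rw [Real.rpow_neg_one]
      have h4 : |g u - g 0| ≤ 2 * C := by
        have ha := hC u ⟨hd0.le.trans hu.1, hu.2⟩
        have hb := hC 0 ⟨le_refl _, hb0.le⟩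
        rw [Real.norm_eq_abs] at ha hb
        calc |g u - g 0| ≤ |g u| + |g 0| := abs_sub _ _
        _ ≤ 2 * C := by linarith
      have h5 : 0 ≤ u ^ (-r) := Real.rpow_nonneg hu0.le _
      calc u ^ (-r) * |g u - g 0| ≤ u ^ (-r) * (2 * C) :=
            mul_le_mul_of_nonneg_left h4 h5
      _ ≤ d⁻¹ * (2 * C) := by
            apply mul_le_mul_of_nonneg_right _ (by positivity)
            calc u ^ (-r) ≤ d ^ (-r) := h1
            _ ≤ d⁻¹ := h3 ▸ h2
    calc (∫ u in d..b, u ^ (-r) * |g u - g 0|)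
        ≤ ∫ _u in d..b, d⁻¹ * (2 * C) :=
          intervalIntegral.integral_mono_on hdb hint1b intervalIntegrable_const hptwise
    _ = (b - d) * (d⁻¹ * (2 * C)) := by rw [intervalIntegral.integral_const, smul_eq_mul]
    _ ≤ d⁻¹ * (2 * C) := by
          apply mul_le_of_le_one_left (by positivity)
          linarith
  -- combine
  have htotal : |I| ≤ ε / 2 * (d ^ (1 - r) / (1 - r)) + d⁻¹ * (2 * C) := by
    rw [step2] at step1
    linarith
  have hnorm : ‖(1 - r) * I‖ = (1 - r) * |I| := by
    rw [Real.norm_eq_abs, abs_mul, abs_of_pos h1r]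
  rw [hnorm]
  have hd1r : d ^ (1 - r) ≤ 1 := Real.rpow_le_one hd0.le hd1 (by linarith)
  have hfinal : (1 - r) * |I| ≤ ε / 2 * d ^ (1 - r) + (1 - r) * (d⁻¹ * (2 * C)) := by
    have := mul_le_mul_of_nonneg_left htotal h1r.le
    calc (1 - r) * |I| ≤ (1 - r) * (ε / 2 * (d ^ (1 - r) / (1 - r)) + d⁻¹ * (2 * C)) := this
    _ = ε / 2 * d ^ (1 - r) + (1 - r) * (d⁻¹ * (2 * C)) := by
        field_simp
  have hsecond : (1 - r) * (d⁻¹ * (2 * C)) < ε / 2 := by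
    have h1 : (1 - r) * (d⁻¹ * (2 * C)) < ε * d / (4 * C + 2) * (d⁻¹ * (2 * C)) ∨
        (1 - r) * (d⁻¹ * (2 * C)) = 0 := by
      rcases eq_or_lt_of_le hC0 with hC' | hC'
      · right; rw [← hC']; ring
      · left
        apply mul_lt_mul_of_pos_right hrε
        positivity
    rcases h1 with h1 | h1
    · have : ε * d / (4 * C + 2) * (d⁻¹ * (2 * C)) ≤ ε / 2 := by
        rw [div_mul_eq_mul_div, div_le_div_iff₀ (by linarith) (by norm_num)]
        have hdd : d * d⁻¹ = 1 := mul_inv_cancel₀ hd0.ne'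
        calc ε * d * (d⁻¹ * (2 * C)) * 2 = ε * (2 * C) * 2 * (d * d⁻¹) := by ring
        _ = ε * (4 * C) := by rw [hdd]; ring
        _ ≤ ε * (4 * C + 2) := by nlinarith
      linarith
    · rw [h1]; linarith
  have : ε / 2 * d ^ (1 - r) ≤ ε / 2 := by nlinarith
  linarith

lemma caputo_aux1 {b : ℝ} (hb0 : 0 < b) (hb1 : b ≤ 1) {g : ℝ → ℝ}
    (hg : ContinuousOn g (Icc 0 b)) :
    Tendsto (fun r : ℝ => (1 - r) * ∫ u in (0:ℝ)..b, u ^ (-r) * g u)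
      (nhdsWithin 1 (Iio 1)) (nhds (g 0)) := by
  have heq : ∀ r ∈ Iio (1:ℝ),
      (1 - r) * ∫ u in (0:ℝ)..b, u ^ (-r) * g u
      = (1 - r) * (∫ u in (0:ℝ)..b, u ^ (-r) * (g u - g 0)) + g 0 * b ^ (1 - r) := by
    intro r hr
    have hr1 : r < 1 := hr
    have h1r : (1:ℝ) - r ≠ 0 := by intro h; linarith [sub_eq_zero.mp h]
    have hintA : IntervalIntegrable (fun u : ℝ => u ^ (-r) * (g u - g 0)) volume 0 b := by
      apply (caputo_rpow_integrable hr1).mul_continuousOn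
      rw [uIcc_of_le hb0.le]
      exact hg.sub continuousOn_const
    have hintB : IntervalIntegrable (fun u : ℝ => u ^ (-r) * g 0) volume 0 b :=
      (caputo_rpow_integrable hr1).mul_const _
    have hsplit : (∫ u in (0:ℝ)..b, u ^ (-r) * g u)
        = (∫ u in (0:ℝ)..b, u ^ (-r) * (g u - g 0)) + ∫ u in (0:ℝ)..b, u ^ (-r) * g 0 := by
      rw [← intervalIntegral.integral_add hintA hintB]
      apply intervalIntegral.integral_congr
      intro u _
      ring
    rw [hsplit]
    rw [intervalIntegral.integral_mul_const, caputo_rpow_integral hr1]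
    field_simp
  have h2 : Tendsto (fun r : ℝ =>
      (1 - r) * (∫ u in (0:ℝ)..b, u ^ (-r) * (g u - g 0)) + g 0 * b ^ (1 - r))
      (nhdsWithin 1 (Iio 1)) (nhds (g 0)) := by
    have hA := caputo_aux0 hb0 hb1 hg
    have hB : Tendsto (fun r : ℝ => g 0 * b ^ (1 - r)) (nhdsWithin 1 (Iio 1)) (nhds (g 0)) := by
      have h0 : Tendsto (fun r : ℝ => 1 - r) (nhds 1) (nhds (0:ℝ)) := by
        have : Tendsto (fun r : ℝ => 1 - r) (nhds 1) (nhds (1 - 1)) :=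
          (continuous_const.sub continuous_id).tendsto 1
        simpa using this
      have : Tendsto (fun r : ℝ => b ^ (1 - r)) (nhds 1) (nhds (b ^ (0:ℝ))) :=
        ((Real.continuousAt_const_rpow (b := (0:ℝ)) hb0.ne').tendsto).comp h0
      rw [Real.rpow_zero] at this
      have h4 := (this.const_mul (g 0)).mono_left
        (nhdsWithin_le_nhds (s := Iio (1:ℝ)))
      simpa using h4
    have := hA.add hB
    simpa using this
  apply h2.congr'
  filter_upwards [self_mem_nhdsWithin] with r hr
  exact (heq r hr).symm

/-- The right Caputo fractional derivative of order `r` of `f` at `t`,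
`^C D_{1^-}^r f(t) = -(1/Γ(1-r)) ∫_t^1 (s-t)^{-r} f'(s) ds`,
tends to `-f'(t)` as `r → 1⁻`, for `f` continuously differentiable on `[0,1]`
and `t ∈ [0,1)`. -/
theorem caputo_right_limit (f f' : ℝ → ℝ)
    (hf : ∀ s ∈ Set.Icc (0:ℝ) 1, HasDerivAt f (f' s) s)
    (hf' : ContinuousOn f' (Set.Icc (0:ℝ) 1))
    (t : ℝ) (ht : t ∈ Set.Ico (0:ℝ) 1) :
    Tendsto (fun r : ℝ =>
        -(1 / Real.Gamma (1 - r)) * ∫ s in t..1, (s - t) ^ (-r) * f' s)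
      (nhdsWithin 1 (Set.Iio 1)) (nhds (-(f' t))) := by
  obtain ⟨ht0, ht1⟩ := ht
  set b : ℝ := 1 - t with hb_def
  have hb0 : 0 < b := by simp [hb_def]; linarith
  have hb1 : b ≤ 1 := by simp [hb_def]; linarith
  set g : ℝ → ℝ := fun u => f' (u + t) with hg_def
  have hg : ContinuousOn g (Icc 0 b) := by
    apply hf'.comp (Continuous.continuousOn (by continuity))
    intro u hu
    constructor
    · have := hu.1; simp [hb_def] at *; linarith
    · have := hu.2; simp [hb_def] at *; linarith
  have hg0 : g 0 = f' t := by simp [hg_def]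
  -- change of variables
  have hsub : ∀ r : ℝ, (∫ s in t..1, (s - t) ^ (-r) * f' s)
      = ∫ u in (0:ℝ)..b, u ^ (-r) * g u := by
    intro r
    have h := intervalIntegral.integral_comp_sub_right
      (a := t) (b := 1) (fun u => u ^ (-r) * f' (u + t)) t
    calc (∫ s in t..1, (s - t) ^ (-r) * f' s)
        = ∫ s in t..1, (s - t) ^ (-r) * f' (s - t + t) := by
          apply intervalIntegral.integral_congr
          intro s _
          simp
    _ = ∫ u in (t - t)..(1 - t), u ^ (-r) * f' (u + t) := h
    _ = ∫ u in (0:ℝ)..b, u ^ (-r) * g u := by rw [sub_self]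
  -- rewrite using Gamma identity
  have heq : ∀ r ∈ Iio (1:ℝ),
      -(1 / Real.Gamma (1 - r)) * ∫ s in t..1, (s - t) ^ (-r) * f' s
      = -(((1 - r) * ∫ u in (0:ℝ)..b, u ^ (-r) * g u) / Real.Gamma (2 - r)) := by
    intro r hr
    have hr1 : r < 1 := hr
    have h1r : (0:ℝ) < 1 - r := by linarith
    have hG : Real.Gamma (2 - r) = (1 - r) * Real.Gamma (1 - r) := by
      have := Real.Gamma_add_one (s := 1 - r) h1r.ne'
      rw [show (1:ℝ) - r + 1 = 2 - r by ring] at this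
      exact this
    have hGpos : 0 < Real.Gamma (1 - r) := Real.Gamma_pos_of_pos h1r
    rw [hsub r, hG]
    rw [mul_comm (1 - r) (Real.Gamma (1 - r)), mul_comm (1 - r)
      (∫ u in (0:ℝ)..b, u ^ (-r) * g u), mul_div_mul_right _ _ h1r.ne']
    ring
  have hnum : Tendsto (fun r : ℝ => (1 - r) * ∫ u in (0:ℝ)..b, u ^ (-r) * g u)
      (nhdsWithin 1 (Iio 1)) (nhds (f' t)) := hg0 ▸ caputo_aux1 hb0 hb1 hg
  have hden : Tendsto (fun r : ℝ => Real.Gamma (2 - r)) (nhdsWithin 1 (Iio 1))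
      (nhds 1) := by
    have hc : ContinuousAt Real.Gamma 1 := by
      apply (Real.differentiableAt_Gamma ?_).continuousAt
      intro m h
      have h2 : (0:ℝ) ≤ (m:ℝ) := Nat.cast_nonneg m
      linarith
    have h2 : Tendsto (fun r : ℝ => 2 - r) (nhds 1) (nhds (1:ℝ)) := by
      have : Tendsto (fun r : ℝ => 2 - r) (nhds 1) (nhds (2 - 1)) :=
        (continuous_const.sub continuous_id).tendsto 1
      norm_num at this
      exact this
    have h3 := hc.tendsto.comp h2
    rw [Real.Gamma_one] at h3
    exact h3.mono_left nhdsWithin_le_nhds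
  have hmain : Tendsto (fun r : ℝ =>
      -(((1 - r) * ∫ u in (0:ℝ)..b, u ^ (-r) * g u) / Real.Gamma (2 - r)))
      (nhdsWithin 1 (Iio 1)) (nhds (-(f' t))) := by
    have := (hnum.div hden one_ne_zero).neg
    simpa using this
  apply hmain.congr'
  filter_upwards [self_mem_nhdsWithin] with r hr
  exact (heq r hr).symm
end

section
/- Let p ∈ (0,1) and let f : [0,1] → ℝ be continuously differentiable. If for every r ∈ (p,1) and every t ∈ [0,1] the right Caputo fractional derivative satisfies ^C D_{1−}^r f(t) = −(1/Γ(1−r)) ∫_t^1 (s−t)^{−r} f′(s) ds ≥ 0, then f is monotone decreasing on [0,1] (i.e., f(t₁) ≥ f(t₂) whenever 0 ≤ t₁ ≤ t₂ ≤ 1). -/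
open Real Set MeasureTheory intervalIntegral

/-- Integrability of `(s - t)^(-r) * f' s` on intervals, for `r < 1`. -/
lemma caputo_kernel_integrable {r t a b : ℝ} (hr : r < 1) {f' : ℝ → ℝ}
    (hf' : ContinuousOn f' (Set.Icc (0:ℝ) 1)) (hab : Set.uIcc a b ⊆ Set.Icc (0:ℝ) 1) :
    IntervalIntegrable (fun s => (s - t) ^ (-r) * f' s) MeasureTheory.volume a b := by
  have h1 : IntervalIntegrable (fun x : ℝ => x ^ (-r)) MeasureTheory.volume (a - t) (b - t) :=
    intervalIntegral.intervalIntegrable_rpow' (by linarith)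
  have h2 := h1.comp_sub_right t
  have h3 : IntervalIntegrable (fun s => (s - t) ^ (-r)) MeasureTheory.volume a b := by
    convert h2 using 2 <;> ring
  exact h3.mul_continuousOn (hf'.mono hab)

set_option maxHeartbeats 1000000 in
/-- If the right Caputo fractional derivative
`^C D_{1^-}^r f(t) = -(1/Γ(1-r)) ∫_t^1 (s-t)^{-r} f'(s) ds` is nonnegative
for all `r ∈ (p,1)` and all `t ∈ [0,1]`, then `f` is monotone decreasing on `[0,1]`. -/
theorem monotone_decreasing_of_caputo_right_nonneg (p : ℝ) (hp : p ∈ Set.Ioo (0:ℝ) 1)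
    (f f' : ℝ → ℝ)
    (hf : ∀ s ∈ Set.Icc (0:ℝ) 1, HasDerivAt f (f' s) s)
    (hf' : ContinuousOn f' (Set.Icc (0:ℝ) 1))
    (hD : ∀ r ∈ Set.Ioo p 1, ∀ t ∈ Set.Icc (0:ℝ) 1,
      0 ≤ -(1 / Real.Gamma (1 - r)) * ∫ s in t..1, (s - t) ^ (-r) * f' s) :
    ∀ t₁ t₂ : ℝ, 0 ≤ t₁ → t₁ ≤ t₂ → t₂ ≤ 1 → f t₂ ≤ f t₁ := by
  -- bound on f'
  obtain ⟨M, hM⟩ := (isCompact_Icc (a := (0:ℝ)) (b := 1)).exists_bound_of_continuousOn hf'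
  set B : ℝ := |M| + 1 with hB
  have hBpos : 0 < B := by positivity
  have hMB : ∀ x ∈ Set.Icc (0:ℝ) 1, |f' x| ≤ B := fun x hx =>
    (hM x hx).trans (by rw [hB]; linarith [le_abs_self M])
  -- Step 1: f' ≤ 0 on [0, 1)
  have key : ∀ t ∈ Set.Ico (0:ℝ) 1, f' t ≤ 0 := by
    intro t ht
    by_contra hc
    push_neg at hc
    set c := f' t with hcdef
    have htIcc : t ∈ Set.Icc (0:ℝ) 1 := ⟨ht.1, ht.2.le⟩
    have hcont : ContinuousWithinAt f' (Set.Icc (0:ℝ) 1) t := hf'.continuousWithinAt htIcc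
    have hmem : {x : ℝ | c / 2 < f' x} ∈ nhdsWithin t (Set.Icc (0:ℝ) 1) :=
      hcont (Ioi_mem_nhds (by linarith : c / 2 < f' t))
    rw [Metric.mem_nhdsWithin_iff] at hmem
    obtain ⟨ε, hε, hball⟩ := hmem
    set δ : ℝ := min (ε / 2) ((1 - t) / 2) with hδdef
    have hδpos : 0 < δ := lt_min (by linarith) (by linarith [ht.2])
    have hδε : δ < ε := lt_of_le_of_lt (min_le_left _ _) (by linarith)
    have hδ1 : t + δ < 1 := by
      have := min_le_right (ε / 2) ((1 - t) / 2)
      have : δ ≤ (1 - t) / 2 := this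
      linarith [ht.2]
    have hfc : ∀ s ∈ Set.Icc t (t + δ), c / 2 ≤ f' s := by
      intro s hs
      have hs1 : s ∈ Metric.ball t ε := by
        rw [Metric.mem_ball, Real.dist_eq, abs_sub_lt_iff]
        constructor <;> [linarith [hs.2]; linarith [hs.1]]
      have hs2 : s ∈ Set.Icc (0:ℝ) 1 := ⟨le_trans ht.1 hs.1, by linarith [hs.2]⟩
      exact le_of_lt (hball ⟨hs1, hs2⟩)
    -- choose r
    set ε' : ℝ := min (c * δ / (2 * B)) (1 - p) / 2 with hε'def
    have hcd : 0 < c * δ / (2 * B) := by positivity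
    have hε'pos : 0 < ε' := by
      rw [hε'def]
      exact div_pos (lt_min hcd (by linarith [hp.2])) two_pos
    have hε'lt : ε' < c * δ / (2 * B) := by
      rw [hε'def]
      have h := min_le_left (c * δ / (2 * B)) (1 - p)
      linarith
    have hε'p : ε' < 1 - p := by
      rw [hε'def]
      have h := min_le_right (c * δ / (2 * B)) (1 - p)
      have := hp.2
      linarith
    set r : ℝ := 1 - ε' with hrdef
    have hr1 : r < 1 := by rw [hrdef]; linarith
    have hrp : p < r := by rw [hrdef]; linarith
    have hr0 : 0 < r := lt_trans hp.1 hrp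
    -- integrability
    have hsub1 : Set.uIcc t (t + δ) ⊆ Set.Icc (0:ℝ) 1 := by
      rw [Set.uIcc_of_le (by linarith)]
      exact Set.Icc_subset_Icc ht.1 (by linarith)
    have hsub2 : Set.uIcc (t + δ) 1 ⊆ Set.Icc (0:ℝ) 1 := by
      rw [Set.uIcc_of_le (by linarith)]
      exact Set.Icc_subset_Icc (by linarith [ht.1]) le_rfl
    have hi1 := caputo_kernel_integrable (r := r) (t := t) hr1 hf' hsub1
    have hi2 := caputo_kernel_integrable (r := r) (t := t) hr1 hf' hsub2
    -- the integral is ≤ 0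
    have hIneg : (∫ s in t..1, (s - t) ^ (-r) * f' s) ≤ 0 := by
      have h := hD r ⟨hrp, hr1⟩ t htIcc
      have hΓ : 0 < Real.Gamma (1 - r) := Real.Gamma_pos_of_pos (by linarith)
      nlinarith [h, one_div_pos.mpr hΓ,
        mul_pos (one_div_pos.mpr hΓ) (lt_of_not_ge (fun hle =>
          absurd h (by nlinarith [one_div_pos.mpr hΓ])))]
    -- split
    have hsplit : (∫ s in t..(t+δ), (s - t) ^ (-r) * f' s)
        + (∫ s in (t+δ)..1, (s - t) ^ (-r) * f' s)
        = ∫ s in t..1, (s - t) ^ (-r) * f' s :=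
      intervalIntegral.integral_add_adjacent_intervals hi1 hi2
    -- lower bound on first piece
    have hrpow_int : IntervalIntegrable (fun s => c / 2 * (s - t) ^ (-r))
        MeasureTheory.volume t (t + δ) := by
      have h1 : IntervalIntegrable (fun x : ℝ => x ^ (-r)) MeasureTheory.volume 0 δ :=
        intervalIntegral.intervalIntegrable_rpow' (by linarith)
      have h2 := h1.comp_sub_right t
      rw [zero_add, add_comm δ t] at h2
      exact h2.const_mul _
    have hlow1 : c / 2 * (δ ^ (1 - r) / (1 - r)) ≤ ∫ s in t..(t+δ), (s - t) ^ (-r) * f' s := by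
      have hmono : ∀ s ∈ Set.Icc t (t + δ), c / 2 * (s - t) ^ (-r) ≤ (s - t) ^ (-r) * f' s := by
        intro s hs
        have h1 : (0:ℝ) ≤ (s - t) ^ (-r) := Real.rpow_nonneg (by linarith [hs.1]) _
        have h2 := hfc s hs
        calc c / 2 * (s - t) ^ (-r) = (s - t) ^ (-r) * (c / 2) := by ring
          _ ≤ (s - t) ^ (-r) * f' s := mul_le_mul_of_nonneg_left h2 h1
      have h := intervalIntegral.integral_mono_on (by linarith : t ≤ t + δ) hrpow_int hi1 hmono
      have hval : (∫ s in t..(t+δ), c / 2 * (s - t) ^ (-r)) = c / 2 * (δ ^ (1 - r) / (1 - r)) := by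
        rw [intervalIntegral.integral_const_mul]
        have : (∫ s in t..(t+δ), (s - t) ^ (-r)) = ∫ x in (t - t)..(t + δ - t), x ^ (-r) := by
          rw [← intervalIntegral.integral_comp_sub_right (fun x => x ^ (-r)) t]
        rw [this]
        have ht0 : t - t = 0 := by ring
        have htδ : t + δ - t = δ := by ring
        rw [ht0, htδ, integral_rpow (Or.inl (by linarith))]
        rw [Real.zero_rpow (by linarith : -r + 1 ≠ 0)]
        rw [show -r + 1 = 1 - r by ring]
        ring
      rw [hval] at h; exact h
    -- lower bound on second piece
    have hlow2 : -(B * δ ^ (-r)) ≤ ∫ s in (t+δ)..1, (s - t) ^ (-r) * f' s := by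
      have hconst_int : IntervalIntegrable (fun _ : ℝ => -(B * δ ^ (-r)))
          MeasureTheory.volume (t + δ) 1 := intervalIntegrable_const
      have hmono : ∀ s ∈ Set.Icc (t + δ) 1, -(B * δ ^ (-r)) ≤ (s - t) ^ (-r) * f' s := by
        intro s hs
        have hst : δ ≤ s - t := by linarith [hs.1]
        have hsp : (0:ℝ) < s - t := lt_of_lt_of_le hδpos hst
        have h1 : (s - t) ^ (-r) ≤ δ ^ (-r) :=
          Real.rpow_le_rpow_of_nonpos hδpos hst (by linarith)
        have h2 : (0:ℝ) ≤ (s - t) ^ (-r) := Real.rpow_nonneg hsp.le _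
        have hsIcc : s ∈ Set.Icc (0:ℝ) 1 := ⟨by linarith [ht.1, hs.1], hs.2⟩
        have h3 : -B ≤ f' s := by
          have := hMB s hsIcc
          have := neg_abs_le (f' s)
          linarith
        calc -(B * δ ^ (-r)) = δ ^ (-r) * (-B) := by ring
          _ ≤ (s - t) ^ (-r) * (-B) := by
              apply mul_le_mul_of_nonpos_right h1 (by linarith)
          _ ≤ (s - t) ^ (-r) * f' s := mul_le_mul_of_nonneg_left h3 h2
      have h := intervalIntegral.integral_mono_on (by linarith : t + δ ≤ 1) hconst_int hi2 hmono
      rw [intervalIntegral.integral_const, smul_eq_mul] at h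
      have hδr : (0:ℝ) ≤ δ ^ (-r) := Real.rpow_nonneg hδpos.le _
      nlinarith [h, mul_nonneg (mul_nonneg hBpos.le hδr) (show (0:ℝ) ≤ t + δ by linarith [ht.1])]
    -- contradiction
    have hδsplit : δ ^ (1 - r) = δ * δ ^ (-r) := by
      rw [show (1 : ℝ) - r = 1 + -r by ring, Real.rpow_add hδpos, Real.rpow_one]
    have h1r : 1 - r = ε' := by rw [hrdef]; ring
    have hδrpos : (0:ℝ) < δ ^ (-r) := Real.rpow_pos_of_pos hδpos _
    have hfinal : 0 < c / 2 * (δ ^ (1 - r) / (1 - r)) - B * δ ^ (-r) := by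
      rw [hδsplit, h1r]
      have : c / 2 * (δ * δ ^ (-r) / ε') - B * δ ^ (-r)
          = δ ^ (-r) * (c * δ / (2 * ε') - B) := by field_simp
      rw [this]
      apply mul_pos hδrpos
      have : B < c * δ / (2 * ε') := by
        rw [lt_div_iff₀ (by positivity)]
        rw [div_lt_div_iff₀ (by positivity) (by positivity)] at hε'lt
        nlinarith
      linarith
    clear_value B c δ ε' r
    linarith [hsplit, hlow1, hlow2, hIneg, hfinal]
  -- Step 2: conclude antitone
  intro t₁ t₂ h0 h12 h21
  have hanti : AntitoneOn f (Set.Icc (0:ℝ) 1) := by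
    apply antitoneOn_of_deriv_nonpos (convex_Icc 0 1)
    · intro x hx; exact (hf x hx).continuousAt.continuousWithinAt
    · intro x hx
      rw [interior_Icc] at hx
      exact (hf x ⟨hx.1.le, hx.2.le⟩).differentiableAt.differentiableWithinAt
    · intro x hx
      rw [interior_Icc] at hx
      rw [(hf x ⟨hx.1.le, hx.2.le⟩).deriv]
      exact key x ⟨hx.1.le, hx.2⟩
  exact hanti ⟨h0, by linarith⟩ ⟨by linarith, h21⟩ h12
end

section
/- Let p ∈ (0,1) and let f : [0,1] → ℝ be continuously differentiable. If for every r ∈ (p,1) and every t ∈ [0,1] the right Caputo fractional derivative satisfies ^C D_{1−}^r f(t) = −(1/Γ(1−r)) ∫_t^1 (s−t)^{−r} f′(s) ds ≤ 0, then f is monotone increasing on [0,1] (i.e., f(t₁) ≤ f(t₂) whenever 0 ≤ t₁ ≤ t₂ ≤ 1). -/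
open Real Set MeasureTheory intervalIntegral

private lemma caputo_aux_integrable {r t : ℝ} (hr : -1 < -r) (a b : ℝ)
    {g : ℝ → ℝ} (hg : ContinuousOn g (Set.uIcc a b)) :
    IntervalIntegrable (fun s => (s - t) ^ (-r) * g s) MeasureTheory.volume a b := by
  have h1 : IntervalIntegrable (fun x : ℝ => x ^ (-r)) MeasureTheory.volume (a - t) (b - t) :=
    intervalIntegral.intervalIntegrable_rpow' hr
  have h2 := h1.comp_sub_right t
  have h3 : a - t + t = a := by ring
  have h4 : b - t + t = b := by ring
  rw [h3, h4] at h2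
  exact h2.mul_continuousOn hg

set_option maxHeartbeats 1000000 in
private lemma caputo_deriv_nonneg (p : ℝ) (hp : p ∈ Set.Ioo (0:ℝ) 1)
    (f' : ℝ → ℝ)
    (hf' : ContinuousOn f' (Set.Icc (0:ℝ) 1))
    (hD : ∀ r ∈ Set.Ioo p 1, ∀ t ∈ Set.Icc (0:ℝ) 1,
      -(1 / Real.Gamma (1 - r)) * (∫ s in t..1, (s - t) ^ (-r) * f' s) ≤ 0) :
    ∀ t ∈ Set.Ico (0:ℝ) 1, 0 ≤ f' t := by
  intro t ht
  by_contra hneg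
  push_neg at hneg
  set c : ℝ := -f' t / 2 with hc
  have hcpos : 0 < c := by simp only [hc]; linarith
  have htmem : t ∈ Set.Icc (0:ℝ) 1 := ⟨ht.1, ht.2.le⟩
  -- continuity: get δ
  have hcw : ContinuousWithinAt f' (Set.Icc 0 1) t := hf' t htmem
  rw [Metric.continuousWithinAt_iff] at hcw
  obtain ⟨δ, hδpos, hδ⟩ := hcw c hcpos
  -- choose δ'
  set δ' : ℝ := min (δ/2) (min ((1 - t)/2) 1) with hδ'
  have hδ'pos : 0 < δ' := by
    apply lt_min (by linarith) (lt_min (by linarith [ht.2]) one_pos)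
  have hδ'le1 : δ' ≤ 1 := le_trans (min_le_right _ _) (min_le_right _ _)
  have hδ'ltδ : δ' < δ := lt_of_le_of_lt (min_le_left _ _) (by linarith)
  have hu1 : t + δ' ≤ 1 := by
    have : δ' ≤ (1 - t)/2 := le_trans (min_le_right _ _) (min_le_left _ _)
    linarith
  -- f' ≤ -c on [t, t+δ']
  have hsmall : ∀ s ∈ Set.Icc t (t + δ'), f' s ≤ -c := by
    intro s hs
    have hs01 : s ∈ Set.Icc (0:ℝ) 1 := ⟨le_trans ht.1 hs.1, le_trans hs.2 hu1⟩
    have hdist : dist s t < δ := by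
      rw [Real.dist_eq, abs_of_nonneg (by linarith [hs.1])]
      linarith [hs.2]
    have := hδ hs01 hdist
    rw [Real.dist_eq] at this
    have := abs_lt.mp this
    have hft : f' t = -2 * c := by simp only [hc]; ring
    linarith [this.2]
  -- bound M
  obtain ⟨M, hM⟩ := isCompact_Icc.exists_bound_of_continuousOn hf'
  have hM0 : 0 ≤ M := le_trans (norm_nonneg _) (hM t htmem)
  -- choose r
  set ε : ℝ := min ((1 - p)/2) (c * δ'^2 / (2 * (M + 1))) with hε
  have hεpos : 0 < ε := by
    apply lt_min (by linarith [hp.2])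
    positivity
  have hεle : ε ≤ c * δ'^2 / (2 * (M + 1)) := min_le_right _ _
  set r : ℝ := 1 - ε with hr
  have hr1 : r < 1 := by simp only [hr]; linarith
  have hrp : p < r := by
    have : ε ≤ (1 - p)/2 := min_le_left _ _
    simp only [hr]; linarith
  have hr0 : 0 < r := by linarith [hp.1]
  have hrneg : -1 < -r := by linarith
  have h1r : 1 - r = ε := by simp only [hr]; ring
  -- the integral is nonneg
  have hΓpos : 0 < Real.Gamma (1 - r) := Real.Gamma_pos_of_pos (by rw [h1r]; exact hεpos)
  have hIpos : 0 ≤ ∫ s in t..1, (s - t) ^ (-r) * f' s := by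
    have := hD r ⟨hrp, hr1⟩ t htmem
    have h2 : 0 ≤ (1 / Real.Gamma (1 - r)) * (∫ s in t..1, (s - t) ^ (-r) * f' s) := by
      nlinarith
    exact nonneg_of_mul_nonneg_right h2 (by positivity)
  -- split the integral
  set u : ℝ := t + δ' with hu
  have htu : t ≤ u := by simp only [hu]; linarith
  have hint1 : IntervalIntegrable (fun s => (s - t) ^ (-r) * f' s) MeasureTheory.volume t u :=
    caputo_aux_integrable hrneg t u (hf'.mono (by
      rw [Set.uIcc_of_le htu]
      exact fun x hx => ⟨le_trans ht.1 hx.1, le_trans hx.2 hu1⟩))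
  have hint2 : IntervalIntegrable (fun s => (s - t) ^ (-r) * f' s) MeasureTheory.volume u 1 :=
    caputo_aux_integrable hrneg u 1 (hf'.mono (by
      rw [Set.uIcc_of_le hu1]
      exact fun x hx => ⟨le_trans (by linarith [ht.1, hδ'pos]) hx.1, hx.2⟩))
  have hsplit : (∫ s in t..1, (s - t) ^ (-r) * f' s)
      = (∫ s in t..u, (s - t) ^ (-r) * f' s) + ∫ s in u..1, (s - t) ^ (-r) * f' s :=
    (intervalIntegral.integral_add_adjacent_intervals hint1 hint2).symm
  -- bound I₁
  have hconst1 : IntervalIntegrable (fun s => (s - t) ^ (-r) * (-c)) MeasureTheory.volume t u :=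
    caputo_aux_integrable hrneg t u continuousOn_const
  have hI1a : (∫ s in t..u, (s - t) ^ (-r) * f' s) ≤ ∫ s in t..u, (s - t) ^ (-r) * (-c) := by
    apply intervalIntegral.integral_mono_on htu hint1 hconst1
    intro s hs
    exact mul_le_mul_of_nonneg_left (hsmall s hs) (Real.rpow_nonneg (by linarith [hs.1]) _)
  have hcomp : (∫ s in t..u, (s - t) ^ (-r)) = δ' ^ ε / ε := by
    have := intervalIntegral.integral_comp_sub_right (a := t) (b := u) (fun x => x ^ (-r)) t
    rw [this]
    have h0 : t - t = (0:ℝ) := by ring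
    have hud : u - t = δ' := by simp only [hu]; ring
    rw [h0, hud, integral_rpow (Or.inl hrneg)]
    rw [Real.zero_rpow (by rw [show -r + 1 = ε by rw [← h1r]; ring]; exact ne_of_gt hεpos)]
    rw [show -r + 1 = ε by rw [← h1r]; ring]
    ring
  have hI1b : (∫ s in t..u, (s - t) ^ (-r) * (-c)) = -c * (δ' ^ ε / ε) := by
    rw [intervalIntegral.integral_mul_const, hcomp]; ring
  have hA : δ' ≤ δ' ^ ε := by
    have : δ' ^ (1:ℝ) ≤ δ' ^ ε :=
      Real.rpow_le_rpow_of_exponent_ge hδ'pos hδ'le1 (by rw [← h1r]; linarith)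
    rwa [Real.rpow_one] at this
  have hI1 : (∫ s in t..u, (s - t) ^ (-r) * f' s) ≤ -c * (δ' / ε) := by
    rw [hI1b] at hI1a
    have : -c * (δ' ^ ε / ε) ≤ -c * (δ' / ε) := by
      apply mul_le_mul_of_nonpos_left _ (by linarith)
      exact div_le_div_of_nonneg_right hA hεpos.le  -- δ'/ε ≤ δ'^ε/ε
    linarith
  -- bound I₂
  have hI2a : (∫ s in u..1, (s - t) ^ (-r) * f' s) ≤ ∫ s in u..1, M / δ' := by
    apply intervalIntegral.integral_mono_on hu1 hint2 intervalIntegrable_const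
    intro s hs
    have hst : δ' ≤ s - t := by have := hs.1; simp only [hu] at this; linarith
    have h0st : (0:ℝ) < s - t := lt_of_lt_of_le hδ'pos hst
    have hb1 : (s - t) ^ (-r) ≤ δ' ^ (-r) :=
      Real.rpow_le_rpow_of_nonpos hδ'pos hst (by linarith)
    have hb2 : δ' ^ (-r) ≤ δ' ^ (-1:ℝ) :=
      Real.rpow_le_rpow_of_exponent_ge hδ'pos hδ'le1 (by linarith)
    have hb3 : δ' ^ (-1:ℝ) = 1 / δ' := by rw [Real.rpow_neg_one]; exact inv_eq_one_div δ'
    have hfs : f' s ≤ M := by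
      have := hM s ⟨by linarith [hs.1, ht.1, hδ'pos], hs.2⟩
      exact le_trans (le_abs_self _) this
    calc (s - t) ^ (-r) * f' s ≤ (s - t) ^ (-r) * M :=
          mul_le_mul_of_nonneg_left hfs (Real.rpow_nonneg h0st.le _)
      _ ≤ (1 / δ') * M := by
          apply mul_le_mul_of_nonneg_right _ hM0
          calc (s - t) ^ (-r) ≤ δ' ^ (-r) := hb1
            _ ≤ δ' ^ (-1:ℝ) := hb2
            _ = 1 / δ' := hb3
      _ = M / δ' := by ring
  have hI2 : (∫ s in u..1, (s - t) ^ (-r) * f' s) ≤ M / δ' := by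
    rw [intervalIntegral.integral_const] at hI2a
    have h1u : (1:ℝ) - u ≤ 1 := by simp only [hu]; linarith [ht.1, hδ'pos]
    have : (1 - u) • (M / δ') ≤ M / δ' := by
      rw [smul_eq_mul]
      have hMδ : 0 ≤ M / δ' := by positivity
      nlinarith
    linarith
  -- combine
  have hfinal : 0 ≤ -c * (δ' / ε) + M / δ' := by
    rw [hsplit] at hIpos; linarith
  -- contradiction
  have hkey : c * δ' * δ' ≤ M * ε := by
    have h1 : c * (δ' / ε) ≤ M / δ' := by linarith
    have h2 : c * δ' / ε ≤ M / δ' := by rw [mul_div_assoc]; exact h1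
    have := (div_le_div_iff₀ hεpos hδ'pos).mp h2
    linarith
  have hkey2 : ε * (2 * (M + 1)) ≤ c * δ'^2 := by
    rw [le_div_iff₀ (by positivity)] at hεle
    exact hεle
  nlinarith [hεpos, hM0, hkey, hkey2]

/-- If the right Caputo fractional derivative
`^C D_{1^-}^r f(t) = -(1/Γ(1-r)) ∫_t^1 (s-t)^{-r} f'(s) ds` is nonpositive
for all `r ∈ (p,1)` and all `t ∈ [0,1]`, then `f` is monotone increasing on `[0,1]`. -/
theorem monotone_increasing_of_caputo_right_nonpos (p : ℝ) (hp : p ∈ Set.Ioo (0:ℝ) 1)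
    (f f' : ℝ → ℝ)
    (hf : ∀ s ∈ Set.Icc (0:ℝ) 1, HasDerivAt f (f' s) s)
    (hf' : ContinuousOn f' (Set.Icc (0:ℝ) 1))
    (hD : ∀ r ∈ Set.Ioo p 1, ∀ t ∈ Set.Icc (0:ℝ) 1,
      -(1 / Real.Gamma (1 - r)) * (∫ s in t..1, (s - t) ^ (-r) * f' s) ≤ 0) :
    ∀ t₁ t₂ : ℝ, 0 ≤ t₁ → t₁ ≤ t₂ → t₂ ≤ 1 → f t₁ ≤ f t₂ := by
  have hnonneg := caputo_deriv_nonneg p hp f' hf' hD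
  have hmono : MonotoneOn f (Set.Icc (0:ℝ) 1) := by
    apply monotoneOn_of_deriv_nonneg (convex_Icc 0 1)
    · exact fun x hx => (hf x hx).continuousAt.continuousWithinAt
    · intro x hx
      rw [interior_Icc] at hx
      exact ((hf x ⟨hx.1.le, hx.2.le⟩).differentiableAt.differentiableWithinAt)
    · intro x hx
      rw [interior_Icc] at hx
      rw [(hf x ⟨hx.1.le, hx.2.le⟩).deriv]
      exact hnonneg x ⟨hx.1.le, hx.2⟩
  intro t₁ t₂ h0 h12 h21
  exact hmono ⟨h0, by linarith⟩ ⟨by linarith, h21⟩ h12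
end

section
/- Let 0 < p, q < 1, ω ∈ ℝ with ω ≠ 0, and let f : [0,1] × ℝ → ℝ be continuous. Assume hypothesis (H1): there exists a constant A ≥ 0 such that ω²x − f(t,x) ≤ A(1−t)^{1−r} for all t ∈ [0,1], all x with 0 ≤ x ≤ A/Γ(q+1), and all r ∈ [p,1). Define α(t) = A t^q (q+1−t)/Γ(q+2). Then α(0) = 0, and for every r ∈ [p,1) and every t ∈ [0,1], ω² α(t) − A(1−t)^{1−r}/Γ(2−r) − f(t, α(t)) ≤ 0. (Here A(1−t)^{1−r}/Γ(2−r) equals the right Caputo derivative of order r of φ(t) = A(1−t), which is the left Riemann–Liouville derivative of order q of α, so α is a lower solution of problem (P1).) -/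
open Real Set

lemma gamma_le_one_of_mem {x : ℝ} (h1 : 1 ≤ x) (h2 : x ≤ 2) : Real.Gamma x ≤ 1 := by
  have hmem : x ∈ segment ℝ (1:ℝ) 2 := by
    rw [segment_eq_Icc (by norm_num)]
    exact ⟨h1, h2⟩
  obtain ⟨a, b, ha, hb, hab, hx⟩ := hmem
  have := Real.convexOn_Gamma.2 (by norm_num : (1:ℝ) ∈ Ioi (0:ℝ))
    (by norm_num : (2:ℝ) ∈ Ioi (0:ℝ)) ha hb hab
  rw [hx] at this
  simpa [Real.Gamma_one, Real.Gamma_two, hab] using this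

/-- Under hypothesis (H1), the function `α(t) = A t^q (q+1-t)/Γ(q+2)` satisfies
`α(0) = 0` and `ω² α(t) − A(1-t)^{1-r}/Γ(2-r) − f(t, α(t)) ≤ 0` for all
`r ∈ [p,1)` and `t ∈ [0,1]`; i.e. `α` is a lower solution of problem (P1). -/
theorem lower_solution (p q : ℝ) (hp : 0 < p) (hp1 : p < 1) (hq : 0 < q) (hq1 : q < 1)
    (ω : ℝ) (hω : ω ≠ 0) (f : ℝ → ℝ → ℝ)
    (hf : ContinuousOn (fun z : ℝ × ℝ => f z.1 z.2) (Set.Icc (0:ℝ) 1 ×ˢ Set.univ))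
    (A : ℝ) (hA : 0 ≤ A)
    (H1 : ∀ t ∈ Set.Icc (0:ℝ) 1, ∀ x : ℝ, 0 ≤ x → x ≤ A / Real.Gamma (q + 1) →
      ∀ r ∈ Set.Ico p 1, ω ^ 2 * x - f t x ≤ A * (1 - t) ^ (1 - r))
    (α : ℝ → ℝ) (hα : ∀ t, α t = A * t ^ q * (q + 1 - t) / Real.Gamma (q + 2)) :
    α 0 = 0 ∧
      ∀ r ∈ Set.Ico p 1, ∀ t ∈ Set.Icc (0:ℝ) 1,
        ω ^ 2 * α t - A * (1 - t) ^ (1 - r) / Real.Gamma (2 - r) - f t (α t) ≤ 0 := by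
  have hΓq1 : 0 < Real.Gamma (q + 1) := Real.Gamma_pos_of_pos (by linarith)
  have hΓq2 : 0 < Real.Gamma (q + 2) := Real.Gamma_pos_of_pos (by linarith)
  have hGam : Real.Gamma (q + 2) = (q + 1) * Real.Gamma (q + 1) := by
    have := Real.Gamma_add_one (show q + 1 ≠ 0 by positivity)
    rw [show q + 1 + 1 = q + 2 by ring] at this
    exact this
  constructor
  · rw [hα 0, Real.zero_rpow (ne_of_gt hq)]
    ring
  · intro r hr t ht
    obtain ⟨hpr, hr1⟩ := hr
    obtain ⟨ht0, ht1⟩ := ht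
    have hr0 : 0 < r := lt_of_lt_of_le hp hpr
    have htq : (0:ℝ) ≤ t ^ q := Real.rpow_nonneg ht0 q
    have htq1 : t ^ q ≤ 1 := Real.rpow_le_one ht0 ht1 (le_of_lt hq)
    have hα0 : 0 ≤ α t := by
      rw [hα t]
      have : 0 ≤ q + 1 - t := by linarith
      positivity
    have hαA : α t ≤ A / Real.Gamma (q + 1) := by
      rw [hα t, hGam, div_le_div_iff₀ (by positivity) hΓq1]
      have h1 : A * t ^ q * (q + 1 - t) ≤ A * (q + 1) := by
        have h2 : t ^ q * (q + 1 - t) ≤ 1 * (q + 1) := by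
          apply mul_le_mul htq1 (by linarith) (by linarith) (by norm_num)
        calc A * t ^ q * (q + 1 - t) = A * (t ^ q * (q + 1 - t)) := by ring
          _ ≤ A * (1 * (q + 1)) := by exact mul_le_mul_of_nonneg_left h2 hA
          _ = A * (q + 1) := by ring
      calc A * t ^ q * (q + 1 - t) * Real.Gamma (q + 1)
          ≤ A * (q + 1) * Real.Gamma (q + 1) := by
            exact mul_le_mul_of_nonneg_right h1 (le_of_lt hΓq1)
        _ = A * ((q + 1) * Real.Gamma (q + 1)) := by ring
    have key := H1 t ⟨ht0, ht1⟩ (α t) hα0 hαA r ⟨hpr, hr1⟩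
    have hΓ2r : 0 < Real.Gamma (2 - r) := Real.Gamma_pos_of_pos (by linarith)
    have hΓ2r1 : Real.Gamma (2 - r) ≤ 1 :=
      gamma_le_one_of_mem (by linarith) (by linarith)
    have hbase : (0:ℝ) ≤ A * (1 - t) ^ (1 - r) := by
      have := Real.rpow_nonneg (by linarith : (0:ℝ) ≤ 1 - t) (1 - r)
      positivity
    have hdiv : A * (1 - t) ^ (1 - r) ≤ A * (1 - t) ^ (1 - r) / Real.Gamma (2 - r) := by
      rw [le_div_iff₀ hΓ2r]
      calc A * (1 - t) ^ (1 - r) * Real.Gamma (2 - r)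
          ≤ A * (1 - t) ^ (1 - r) * 1 := mul_le_mul_of_nonneg_left hΓ2r1 hbase
        _ = A * (1 - t) ^ (1 - r) := by ring
    linarith
end
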